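/- Suppose a group-valued homogeneous measure λ: 𝔹 → G has the Rokhlin property and the top element 1 admits two equi-measured N-partitions (N > 1) with common measures α and β respectively. Then α = β. -/

import Mathlib

variable {B : Type*} [BooleanAlgebra B] {S : Type*} [AddCommMonoid S]

/-- An `S`-valued finitely additive measure on the Boolean algebra `B`. -/
def IsBAMeasure (μ : B → S) : Prop :=
  μ ⊥ = 0 ∧ ∀ a b : B, Disjoint a b → μ (a ⊔ b) = μ a + μ b

/-- An element is proper if it differs from `⊥` and `⊤`. -/
def IsProperElem (a : B) : Prop := a ≠ ⊥ ∧ a ≠ ⊤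

/-- `{a, b, c}` is a partition of `B` into three nonzero pairwise disjoint pieces. -/
def IsPartition3 (a b c : B) : Prop :=
  a ≠ ⊥ ∧ b ≠ ⊥ ∧ c ≠ ⊥ ∧ Disjoint a b ∧ Disjoint a c ∧ Disjoint b c ∧ a ⊔ b ⊔ c = ⊤

/-- A Boolean automorphism `φ` preserves the measure `μ`. -/
def PreservesMeas (μ : B → S) (φ : B ≃o B) : Prop := ∀ x : B, μ (φ x) = μ x

/-- `μ` is homogeneous: every partial `μ`-isomorphism on a 4-element subalgebra
(equivalently, determined by proper `a ↦ b` with `μ a = μ b`, `μ aᶜ = μ bᶜ`)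
extends to a `μ`-automorphism. -/
def MeasHomogeneous (μ : B → S) : Prop :=
  ∀ a b : B, IsProperElem a → IsProperElem b → μ a = μ b → μ aᶜ = μ bᶜ →
    ∃ φ : B ≃o B, PreservesMeas μ φ ∧ φ a = b

/-- The 4 elements property (4EP). -/
def MeasHas4EP (μ : B → S) : Prop :=
  ∀ a b c d : B, IsPartition3 a b c → μ a + μ b = μ d → μ c = μ dᶜ →
    ∃ p q : B, IsProperElem p ∧ IsProperElem q ∧ Disjoint p q ∧
      μ p = μ a ∧ μ q = μ b ∧ p ⊔ q = d

/-- The trinary spectrum of a measure. -/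
def TrinarySpectrum (μ : B → S) : Set (S × S × S) :=
  {t | ∃ a b c : B, IsPartition3 a b c ∧ t = (μ a, μ b, μ c)}

/-- `Aut(μ)` has a dense conjugacy class (Rokhlin property). -/
def RokhlinProperty (μ : B → S) : Prop :=
  ∃ h : B ≃o B, PreservesMeas μ h ∧
    ∀ g : B ≃o B, PreservesMeas μ g → ∀ F : Finset B,
      ∃ u : B ≃o B, PreservesMeas μ u ∧
        ∀ x ∈ F, u (h (u.symm x)) = g x ∧ u (h.symm (u.symm x)) = g.symm x

/-- `j` admits an equi-measured `N`-partition with common measure `c`. -/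
def AdmitsEquiPartitionWith (μ : B → S) (N : ℕ) (j : B) (c : S) : Prop :=
  ∃ b : Fin N → B, (∀ i, b i ≠ ⊥) ∧ (∀ i k : Fin N, i ≠ k → Disjoint (b i) (b k)) ∧
    Finset.univ.sup b = j ∧ ∀ i, μ (b i) = c

/-! A rotation `b i ↦ b (i + 1)` of an equi-measured partition extends to a `λ`-automorphism by a
back-and-forth construction: homogeneity moves each atom of a finite partial isomorphism onto its
image, which lets one refine it to absorb any new element on either side, and countability lets one
absorb them all. The element `h` with dense conjugacy class can be conjugated to agree with such a
rotation on the pieces, so `h` itself rotates an equi-measured partition `d` of measure `α` and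
another `e` of measure `β`. Then `λ (d i ⊓ e j)` depends only on `j - i`, and summing it along a row
gives `α`, along a column `β`. -/

open Finset Filter Function

namespace IsBAMeasure

variable {μ : B → S}

theorem map_finset_sup (hμ : IsBAMeasure μ) {ι : Type*} (t : Finset ι)
    {f : ι → B} (hf : (t : Set ι).PairwiseDisjoint f) :
    μ (t.sup f) = ∑ i ∈ t, μ (f i) := by
  classical
  induction t using Finset.induction_on with
  | empty => simpa using hμ.1
  | insert a t ha ih =>
    have hdisj : Disjoint (f a) (t.sup f) := Finset.disjoint_sup_right.2 fun i hi =>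
      hf (by simp) (by simp [hi]) (ne_of_mem_of_not_mem hi ha).symm
    rw [sup_insert, sum_insert ha, hμ.2 _ _ hdisj, ih (hf.subset (by simp))]

theorem map_eq_sum_inf (hμ : IsBAMeasure μ) {ι : Type*} [Fintype ι]
    {e : ι → B} (he : Pairwise (Disjoint on e)) (hsup : univ.sup e = ⊤) (x : B) :
    μ x = ∑ j, μ (x ⊓ e j) := by
  conv_lhs => rw [← inf_top_eq x, ← hsup, sup_inf_distrib_left]
  exact hμ.map_finset_sup _ fun i _ j _ hij => (he hij).mono inf_le_right inf_le_right

theorem map_compl {G : Type*} [AddCommGroup G] {μ : B → G} (hμ : IsBAMeasure μ) (x : B) :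
    μ xᶜ = μ ⊤ - μ x := by
  rw [← sup_compl_eq_top (x := x), hμ.2 _ _ disjoint_compl_right, add_sub_cancel_left]

end IsBAMeasure

theorem PreservesMeas.symm {X : Type*} {μ : B → X} {φ : B ≃o B} (hφ : PreservesMeas μ φ) :
    PreservesMeas μ φ.symm := fun x => by
  rw [← hφ (φ.symm x), φ.apply_symm_apply]

/-- A finite partial `μ`-isomorphism, encoded by the pairs `(a, φ a)` where `a` runs over the atoms
of its domain subalgebra (a pair `(⊥, ⊥)` is harmless and allowed). -/
structure IsPartialIso {M : Type*} (μ : B → M) (s : Finset (B × B)) : Prop where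
  fst_eq_bot_iff : ∀ p ∈ s, p.1 = ⊥ ↔ p.2 = ⊥
  map_fst_eq : ∀ p ∈ s, μ p.1 = μ p.2
  pairwiseDisjoint_fst : (s : Set (B × B)).PairwiseDisjoint Prod.fst
  pairwiseDisjoint_snd : (s : Set (B × B)).PairwiseDisjoint Prod.snd
  sup_fst : s.sup Prod.fst = ⊤
  sup_snd : s.sup Prod.snd = ⊤

open scoped Classical

namespace PartialIso

noncomputable def swap {α : Type*} (s : Finset (α × α)) : Finset (α × α) := s.image Prod.swap

noncomputable def transport (s : Finset (B × B)) (x : B) : B := {p ∈ s | p.1 ≤ x}.sup Prod.snd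

def InDom (s : Finset (B × B)) (x : B) : Prop := ∀ p ∈ s, p.1 ≤ x ∨ Disjoint p.1 x

def Refines (s t : Finset (B × B)) : Prop := ∀ q ∈ t, ∃ p ∈ s, q.1 ≤ p.1 ∧ q.2 ≤ p.2

noncomputable def split (φ : B × B → B ≃o B) (s : Finset (B × B)) (x : B) : Finset (B × B) :=
  (s ×ˢ {x, xᶜ}).image fun q => (q.1.1 ⊓ q.2, φ q.1 (q.1.1 ⊓ q.2))

variable {s t u : Finset (B × B)} {x : B} {p : B × B}

@[simp]
theorem mem_swap {α : Type*} {s : Finset (α × α)} {p : α × α} : p ∈ swap s ↔ p.swap ∈ s :=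
  mem_image.trans ⟨by rintro ⟨q, hq, rfl⟩; simpa using hq, fun h => ⟨p.swap, h, p.swap_swap⟩⟩

@[simp]
theorem swap_swap {α : Type*} (s : Finset (α × α)) : swap (swap s) = s := by
  ext p; simp

theorem transport_swap (s : Finset (B × B)) (y : B) :
    transport (swap s) y = {p ∈ s | p.2 ≤ y}.sup Prod.fst := by
  rw [transport, swap, filter_image, sup_image]
  rfl

theorem transport_mono (s : Finset (B × B)) : Monotone (transport s) := fun _ _ hxy =>
  sup_mono fun _ hp => mem_filter.2 ⟨(mem_filter.1 hp).1, (mem_filter.1 hp).2.trans hxy⟩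

theorem Refines.refl (s : Finset (B × B)) : Refines s s := fun q hq => ⟨q, hq, le_rfl, le_rfl⟩

theorem Refines.trans (hst : Refines s t) (htu : Refines t u) : Refines s u := fun r hr =>
  let ⟨q, hq, hrq₁, hrq₂⟩ := htu r hr
  let ⟨p, hp, hqp₁, hqp₂⟩ := hst q hq
  ⟨p, hp, hrq₁.trans hqp₁, hrq₂.trans hqp₂⟩

theorem Refines.swap (hst : Refines s t) : Refines (swap s) (swap t) := fun q hq =>
  let ⟨p, hp, h₁, h₂⟩ := hst q.swap (mem_swap.1 hq)
  ⟨p.swap, mem_swap.2 (by simpa using hp), h₂, h₁⟩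

theorem InDom.of_refines (hx : InDom s x) (hst : Refines s t) : InDom t x := fun q hq => by
  obtain ⟨p, hp, hqp, -⟩ := hst q hq
  exact (hx p hp).imp hqp.trans (Disjoint.mono_left hqp)

end PartialIso

open PartialIso

namespace IsPartialIso

variable {M : Type*} {μ : B → M} {s t : Finset (B × B)} {x : B} {p : B × B}

theorem swap (hs : IsPartialIso μ s) : IsPartialIso μ (swap s) where
  fst_eq_bot_iff q hq := (hs.fst_eq_bot_iff _ (mem_swap.1 hq)).symm
  map_fst_eq q hq := (hs.map_fst_eq _ (mem_swap.1 hq)).symm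
  pairwiseDisjoint_fst q hq r hr hqr :=
    hs.pairwiseDisjoint_snd (mem_swap.1 hq) (mem_swap.1 hr) (Prod.swap_injective.ne hqr)
  pairwiseDisjoint_snd q hq r hr hqr :=
    hs.pairwiseDisjoint_fst (mem_swap.1 hq) (mem_swap.1 hr) (Prod.swap_injective.ne hqr)
  sup_fst := by rw [PartialIso.swap, sup_image]; exact hs.sup_snd
  sup_snd := by rw [PartialIso.swap, sup_image]; exact hs.sup_fst

theorem sup_filter_fst (hs : IsPartialIso μ s) (hx : InDom s x) :
    {p ∈ s | p.1 ≤ x}.sup Prod.fst = x := by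
  refine le_antisymm (Finset.sup_le fun p hp => (mem_filter.1 hp).2) ?_
  calc x = s.sup fun p => x ⊓ p.1 := by rw [← sup_inf_distrib_left, hs.sup_fst, inf_top_eq]
    _ ≤ _ := Finset.sup_le fun p hp => (hx p hp).elim
        (fun h => inf_le_right.trans (le_sup (f := Prod.fst) (mem_filter.2 ⟨hp, h⟩)))
        (fun h => h.symm.eq_bot ▸ bot_le)

theorem disjoint_transport (hs : IsPartialIso μ s) (hp : p ∈ s) (hpx : Disjoint p.1 x) :
    Disjoint p.2 (transport s x) := by
  refine Finset.disjoint_sup_right.2 fun q hq => ?_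
  obtain ⟨hq, hqx⟩ := mem_filter.1 hq
  rcases eq_or_ne p q with rfl | hpq
  · rw [(hs.fst_eq_bot_iff p hp).1 (hpx.eq_bot_of_le hqx)]
    exact disjoint_bot_left
  · exact hs.pairwiseDisjoint_snd hp hq hpq

theorem snd_le_transport_iff (hs : IsPartialIso μ s) (hx : InDom s x) (hp : p ∈ s) :
    p.2 ≤ transport s x ↔ p.1 ≤ x := by
  rcases hx p hp with h | h
  · exact iff_of_true (le_sup (f := Prod.snd) (mem_filter.2 ⟨hp, h⟩)) h
  · have hd := hs.disjoint_transport hp h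
    exact ⟨fun h₂ => ((hs.fst_eq_bot_iff p hp).2 (hd.eq_bot_of_le h₂)).symm ▸ bot_le,
      fun h₁ => ((hs.fst_eq_bot_iff p hp).1 (h.eq_bot_of_le h₁)).symm ▸ bot_le⟩

theorem transport_swap_transport (hs : IsPartialIso μ s) (hx : InDom s x) :
    transport (PartialIso.swap s) (transport s x) = x := by
  rw [transport_swap, filter_congr fun p hp => hs.snd_le_transport_iff hx hp, hs.sup_filter_fst hx]

theorem map_transport [AddCommMonoid M] (hμ : IsBAMeasure μ) (hs : IsPartialIso μ s)
    (hx : InDom s x) :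
    μ (transport s x) = μ x := by
  set F := {p ∈ s | p.1 ≤ x}
  have hF : (F : Set (B × B)) ⊆ s := coe_subset.2 (filter_subset _ _)
  calc μ (transport s x) = ∑ p ∈ F, μ p.2 :=
        hμ.map_finset_sup F (hs.pairwiseDisjoint_snd.subset hF)
    _ = ∑ p ∈ F, μ p.1 := sum_congr rfl fun p hp => (hs.map_fst_eq p (mem_filter.1 hp).1).symm
    _ = μ (F.sup Prod.fst) := (hμ.map_finset_sup F (hs.pairwiseDisjoint_fst.subset hF)).symm
    _ = μ x := by rw [hs.sup_filter_fst hx]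

theorem transport_of_refines (hs : IsPartialIso μ s) (ht : IsPartialIso μ t) (hst : Refines s t)
    (hx : InDom s x) : transport t x = transport s x := by
  apply le_antisymm
  · refine Finset.sup_le fun q hq => ?_
    obtain ⟨hq, hqx⟩ := mem_filter.1 hq
    obtain ⟨p, hp, hqp₁, hqp₂⟩ := hst q hq
    rcases hx p hp with hpx | hpx
    · exact hqp₂.trans (le_sup (f := Prod.snd) (mem_filter.2 ⟨hp, hpx⟩))
    · rw [(ht.fst_eq_bot_iff q hq).1 ((hpx.mono_left hqp₁).eq_bot_of_le hqx)]
      exact bot_le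
  · refine Finset.sup_le fun p hp => ?_
    obtain ⟨hp, hpx⟩ := mem_filter.1 hp
    calc p.2 = t.sup fun q => p.2 ⊓ q.2 := by rw [← sup_inf_distrib_left, ht.sup_snd, inf_top_eq]
      _ ≤ transport t x := Finset.sup_le fun q hq => by
        obtain ⟨r, hr, hqr₁, hqr₂⟩ := hst q hq
        rcases eq_or_ne r p with rfl | hrp
        · exact inf_le_right.trans (le_sup (f := Prod.snd) (mem_filter.2 ⟨hq, hqr₁.trans hpx⟩))
        · rw [((hs.pairwiseDisjoint_snd hp hr hrp.symm).mono_right hqr₂).eq_bot]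
          exact bot_le

theorem inDom_fst (hs : IsPartialIso μ s) (hp : p ∈ s) : InDom s p.1 := fun q hq => by
  rcases eq_or_ne q p with rfl | hqp
  · exact Or.inl le_rfl
  · exact Or.inr (hs.pairwiseDisjoint_fst hq hp hqp)

theorem transport_fst (hs : IsPartialIso μ s) (hp : p ∈ s) : transport s p.1 = p.2 := by
  refine le_antisymm (Finset.sup_le fun q hq => ?_)
    (le_sup (f := Prod.snd) (mem_filter.2 ⟨hp, le_rfl⟩))
  obtain ⟨hq, hqp⟩ := mem_filter.1 hq
  rcases eq_or_ne q p with rfl | hne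
  · exact le_rfl
  · rw [(hs.fst_eq_bot_iff q hq).1 ((hs.pairwiseDisjoint_fst hq hp hne).eq_bot_of_le hqp)]
    exact bot_le

theorem transport_top (hs : IsPartialIso μ s) : transport s ⊤ = ⊤ := by
  simp [transport, hs.sup_snd]

theorem snd_eq_top (hs : IsPartialIso μ s) (hp : p ∈ s) (h : p.1 = ⊤) : p.2 = ⊤ := by
  rw [← hs.transport_fst hp, h, hs.transport_top]

theorem exists_orderIso_map_fst {G : Type*} [AddCommGroup G] {μ : B → G} (hμ : IsBAMeasure μ)
    (hhom : MeasHomogeneous μ) (hs : IsPartialIso μ s) (hp : p ∈ s) :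
    ∃ φ : B ≃o B, PreservesMeas μ φ ∧ φ p.1 = p.2 := by
  have hbot := hs.fst_eq_bot_iff p hp
  have htop : p.1 = ⊤ ↔ p.2 = ⊤ :=
    ⟨hs.snd_eq_top hp, hs.swap.snd_eq_top (p := p.swap) (mem_swap.2 (by simpa using hp))⟩
  by_cases hp₁ : IsProperElem p.1
  · exact hhom _ _ hp₁ ⟨hbot.not.1 hp₁.1, htop.not.1 hp₁.2⟩ (hs.map_fst_eq p hp)
      (by rw [hμ.map_compl, hμ.map_compl, hs.map_fst_eq p hp])
  · refine ⟨OrderIso.refl B, fun _ => rfl, ?_⟩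
    rcases not_and_or.1 hp₁ with h | h <;> rw [not_not] at h
    · simp [h, hbot.1 h]
    · simp [h, htop.1 h]

section Split

variable {φ : B × B → B ≃o B}

theorem disjoint_split_of_ne (hs : IsPartialIso μ s) (hφs : ∀ p ∈ s, φ p p.1 = p.2)
    {q r : B × B} (hq : q ∈ split φ s x) (hr : r ∈ split φ s x) (hqr : q ≠ r) :
    Disjoint q.1 r.1 ∧ Disjoint q.2 r.2 := by
  obtain ⟨⟨p, y⟩, hpy, rfl⟩ := mem_image.1 hq
  obtain ⟨⟨p', y'⟩, hpy', rfl⟩ := mem_image.1 hr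
  simp only [mem_product, mem_insert, mem_singleton] at hpy hpy'
  rcases eq_or_ne p p' with rfl | hpp'
  · have hyy' : Disjoint y y' := by
      rcases hpy.2 with rfl | rfl <;> rcases hpy'.2 with rfl | rfl
      all_goals first
        | exact absurd rfl hqr
        | exact disjoint_compl_right
        | exact disjoint_compl_left
    have hd : Disjoint (p.1 ⊓ y) (p.1 ⊓ y') := hyy'.mono inf_le_right inf_le_right
    exact ⟨hd, hd.map_orderIso _⟩
  · have hle : ∀ p ∈ s, ∀ y, φ p (p.1 ⊓ y) ≤ p.2 := fun p hp y =>
      hφs p hp ▸ (φ p).monotone inf_le_left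
    exact ⟨(hs.pairwiseDisjoint_fst hpy.1 hpy'.1 hpp').mono inf_le_left inf_le_left,
      (hs.pairwiseDisjoint_snd hpy.1 hpy'.1 hpp').mono (hle p hpy.1 y) (hle p' hpy'.1 y')⟩

theorem split (hs : IsPartialIso μ s) (hφ : ∀ p ∈ s, PreservesMeas μ (φ p))
    (hφs : ∀ p ∈ s, φ p p.1 = p.2) : IsPartialIso μ (split φ s x) where
  fst_eq_bot_iff q hq := by
    obtain ⟨⟨p, y⟩, -, rfl⟩ := mem_image.1 hq
    exact (map_eq_bot_iff _).symm
  map_fst_eq q hq := by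
    obtain ⟨⟨p, y⟩, hpy, rfl⟩ := mem_image.1 hq
    exact (hφ p (mem_product.1 hpy).1 _).symm
  pairwiseDisjoint_fst q hq r hr hqr := (hs.disjoint_split_of_ne hφs hq hr hqr).1
  pairwiseDisjoint_snd q hq r hr hqr := (hs.disjoint_split_of_ne hφs hq hr hqr).2
  sup_fst := by
    rw [PartialIso.split, sup_image, sup_product_left, ← hs.sup_fst]
    refine sup_congr rfl fun p _ => ?_
    simp [← inf_sup_left]
  sup_snd := by
    rw [PartialIso.split, sup_image, sup_product_left, ← hs.sup_snd]
    refine sup_congr rfl fun p hp => ?_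
    simp [← inf_sup_left, hφs p hp]

end Split

theorem exists_refines_inDom {G : Type*} [AddCommGroup G] {μ : B → G} (hμ : IsBAMeasure μ)
    (hhom : MeasHomogeneous μ) (hs : IsPartialIso μ s) (x : B) :
    ∃ t, IsPartialIso μ t ∧ Refines s t ∧ InDom t x := by
  choose! φ hφ hφs using fun p (hp : p ∈ s) => hs.exists_orderIso_map_fst hμ hhom hp
  refine ⟨PartialIso.split φ s x, hs.split hφ hφs, fun q hq => ?_, fun q hq => ?_⟩ <;>
    obtain ⟨⟨p, y⟩, hpy, rfl⟩ := mem_image.1 hq <;>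
    simp only [mem_product, mem_insert, mem_singleton] at hpy
  · exact ⟨p, hpy.1, inf_le_left, hφs p hpy.1 ▸ (φ p).monotone inf_le_left⟩
  · rcases hpy.2 with rfl | rfl
    · exact Or.inl inf_le_right
    · exact Or.inr (disjoint_compl_left.mono_left inf_le_right)

theorem exists_refines_inDom_inDom_swap {G : Type*} [AddCommGroup G] {μ : B → G}
    (hμ : IsBAMeasure μ) (hhom : MeasHomogeneous μ) (hs : IsPartialIso μ s) (x : B) :
    ∃ t, IsPartialIso μ t ∧ Refines s t ∧ InDom t x ∧ InDom (PartialIso.swap t) x := by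
  obtain ⟨t₁, ht₁, hst₁, hx₁⟩ := hs.exists_refines_inDom hμ hhom x
  obtain ⟨t₂, ht₂, hst₂, hx₂⟩ := ht₁.swap.exists_refines_inDom hμ hhom x
  have h₁₂ : Refines t₁ (PartialIso.swap t₂) := by simpa using hst₂.swap
  exact ⟨_, ht₂.swap, hst₁.trans h₁₂, hx₁.of_refines h₁₂, by simpa using hx₂⟩

end IsPartialIso

structure IsBackAndForthChain {M : Type*} (μ : B → M) (P : ℕ → Finset (B × B)) : Prop where
  isPartialIso : ∀ n, IsPartialIso μ (P n)
  refines_succ : ∀ n, Refines (P n) (P (n + 1))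
  exists_inDom : ∀ x, ∃ n, InDom (P n) x ∧ InDom (PartialIso.swap (P n)) x

namespace IsBackAndForthChain

variable {M : Type*} {μ : B → M} {P : ℕ → Finset (B × B)}

theorem refines_of_le (hP : IsBackAndForthChain μ P) {m n : ℕ} (hmn : m ≤ n) :
    Refines (P m) (P n) := by
  induction n, hmn using Nat.le_induction with
  | base => exact Refines.refl _
  | succ n _ ih => exact ih.trans (hP.refines_succ n)

theorem swap (hP : IsBackAndForthChain μ P) :
    IsBackAndForthChain μ fun n => PartialIso.swap (P n) where
  isPartialIso n := (hP.isPartialIso n).swap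
  refines_succ n := (hP.refines_succ n).swap
  exists_inDom x := by simpa [and_comm] using hP.exists_inDom x

theorem eventually_inDom (hP : IsBackAndForthChain μ P) (x : B) :
    ∀ᶠ n in atTop, InDom (P n) x := by
  obtain ⟨n₀, hx, -⟩ := hP.exists_inDom x
  exact eventually_atTop.2 ⟨n₀, fun n hn => hx.of_refines (hP.refines_of_le hn)⟩

theorem exists_eventually_transport_eq (hP : IsBackAndForthChain μ P) (x : B) :
    ∃ y, ∀ᶠ n in atTop, transport (P n) x = y := by
  obtain ⟨n₀, hx, -⟩ := hP.exists_inDom x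
  exact ⟨transport (P n₀) x, eventually_atTop.2 ⟨n₀, fun n hn =>
    (hP.isPartialIso n₀).transport_of_refines (hP.isPartialIso n) (hP.refines_of_le hn) hx⟩⟩

theorem leftInverse (hP : IsBackAndForthChain μ P) {Φ Ψ : B → B}
    (hΦ : ∀ x, ∀ᶠ n in atTop, transport (P n) x = Φ x)
    (hΨ : ∀ y, ∀ᶠ n in atTop, transport (PartialIso.swap (P n)) y = Ψ y) :
    LeftInverse Ψ Φ := fun x => by
  obtain ⟨n, hx, hΦx, hΨΦx⟩ := ((hP.eventually_inDom x).and ((hΦ x).and (hΨ (Φ x)))).exists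
  rw [← hΨΦx, ← hΦx, (hP.isPartialIso n).transport_swap_transport hx]

theorem monotone_of_eventually_transport_eq {Φ : B → B}
    (hΦ : ∀ x, ∀ᶠ n in atTop, transport (P n) x = Φ x) : Monotone Φ := fun x y hxy => by
  obtain ⟨n, hx, hy⟩ := ((hΦ x).and (hΦ y)).exists
  rw [← hx, ← hy]
  exact transport_mono _ hxy

theorem exists_orderIso [AddCommMonoid M] (hμ : IsBAMeasure μ) (hP : IsBackAndForthChain μ P) :
    ∃ φ : B ≃o B, PreservesMeas μ φ ∧ ∀ x, ∀ᶠ n in atTop, transport (P n) x = φ x := by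
  choose Φ hΦ using hP.exists_eventually_transport_eq
  choose Ψ hΨ using hP.swap.exists_eventually_transport_eq
  let e : B ≃ B := ⟨Φ, Ψ, hP.leftInverse hΦ hΨ, hP.swap.leftInverse hΨ (by simpa using hΦ)⟩
  refine ⟨e.toOrderIso (monotone_of_eventually_transport_eq hΦ)
    (monotone_of_eventually_transport_eq hΨ), fun x => ?_, hΦ⟩
  obtain ⟨n, hx, hΦx⟩ := ((hP.eventually_inDom x).and (hΦ x)).exists
  change μ (Φ x) = μ x
  rw [← hΦx, (hP.isPartialIso n).map_transport hμ hx]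

end IsBackAndForthChain

section Homogeneous

variable {G : Type*} [AddCommGroup G] {μ : B → G}

theorem IsPartialIso.exists_isBackAndForthChain [Countable B] (hμ : IsBAMeasure μ)
    (hhom : MeasHomogeneous μ) {s : Finset (B × B)} (hs : IsPartialIso μ s) :
    ∃ P, P 0 = s ∧ IsBackAndForthChain μ P := by
  obtain ⟨f, hf⟩ := exists_surjective_nat B
  choose! next hnext using fun t (ht : IsPartialIso μ t) (x : B) =>
    ht.exists_refines_inDom_inDom_swap hμ hhom x
  let P : ℕ → Finset (B × B) := fun n => Nat.rec s (fun k t => next t (f k)) n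
  have hP : ∀ n, IsPartialIso μ (P n) := fun n => by
    induction n with
    | zero => exact hs
    | succ n ih => exact (hnext _ ih _).1
  refine ⟨P, rfl, hP, fun n => (hnext _ (hP n) _).2.1, fun x => ?_⟩
  obtain ⟨n, rfl⟩ := hf x
  exact ⟨n + 1, (hnext _ (hP n) _).2.2⟩

theorem IsPartialIso.exists_orderIso_extends [Countable B] (hμ : IsBAMeasure μ)
    (hhom : MeasHomogeneous μ) {s : Finset (B × B)} (hs : IsPartialIso μ s) :
    ∃ φ : B ≃o B, PreservesMeas μ φ ∧ ∀ p ∈ s, φ p.1 = p.2 := by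
  obtain ⟨P, rfl, hP⟩ := hs.exists_isBackAndForthChain hμ hhom
  obtain ⟨φ, hφ, hlim⟩ := hP.exists_orderIso hμ
  refine ⟨φ, hφ, fun p hp => ?_⟩
  obtain ⟨n, hn⟩ := (hlim p.1).exists
  rw [← hn, hs.transport_of_refines (hP.isPartialIso n) (hP.refines_of_le n.zero_le)
    (hs.inDom_fst hp), hs.transport_fst hp]

end Homogeneous

theorem Fin.apply_eq_apply_zero_of_apply_add_one {X : Sort*} {n : ℕ} {F : Fin (n + 1) → X}
    (hF : ∀ i, F (i + 1) = F i) (i : Fin (n + 1)) : F i = F 0 :=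
  Fin.induction rfl (fun i hi => by rw [← Fin.coeSucc_eq_succ, hF, hi]) i

structure IsEquiPartition {M : Type*} {N : ℕ} (μ : B → M) (c : M) (b : Fin N → B) : Prop where
  ne_bot : ∀ i, b i ≠ ⊥
  pairwise_disjoint : Pairwise (Disjoint on b)
  sup_eq_top : univ.sup b = ⊤
  map_eq : ∀ i, μ (b i) = c

theorem AdmitsEquiPartitionWith.exists_isEquiPartition {M : Type*} {N : ℕ} {μ : B → M} {c : M}
    (h : AdmitsEquiPartitionWith μ N ⊤ c) : ∃ b : Fin N → B, IsEquiPartition μ c b :=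
  let ⟨b, hne, hdisj, hsup, hmeas⟩ := h
  ⟨b, ⟨hne, fun i k => hdisj i k, hsup, hmeas⟩⟩

namespace IsEquiPartition

variable {M : Type*} {N : ℕ} {μ : B → M} {c : M} {b : Fin N → B}

theorem map_orderIso (hb : IsEquiPartition μ c b) {φ : B ≃o B} (hφ : PreservesMeas μ φ) :
    IsEquiPartition μ c fun i => φ (b i) where
  ne_bot i := (map_eq_bot_iff φ).not.2 (hb.ne_bot i)
  pairwise_disjoint _ _ hij := (hb.pairwise_disjoint hij).map_orderIso φ
  sup_eq_top := (map_finset_sup φ univ b).symm.trans (by rw [hb.sup_eq_top, OrderIso.map_top])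
  map_eq i := (hφ _).trans (hb.map_eq i)

theorem exists_orderIso_rotate {G : Type*} [AddCommGroup G] {μ : B → G} {c : G} [Countable B]
    (hμ : IsBAMeasure μ) (hhom : MeasHomogeneous μ) {n : ℕ} {b : Fin (n + 1) → B}
    (hb : IsEquiPartition μ c b) :
    ∃ g : B ≃o B, PreservesMeas μ g ∧ ∀ i, g (b i) = b (i + 1) := by
  have hs : IsPartialIso μ (univ.image fun i => (b i, b (i + 1))) :=
    { fst_eq_bot_iff := by simp [hb.ne_bot]
      map_fst_eq := by simp [hb.map_eq]
      pairwiseDisjoint_fst := by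
        rw [coe_image]
        rintro _ ⟨i, -, rfl⟩ _ ⟨j, -, rfl⟩ hij
        exact hb.pairwise_disjoint (by rintro rfl; exact hij rfl)
      pairwiseDisjoint_snd := by
        rw [coe_image]
        rintro _ ⟨i, -, rfl⟩ _ ⟨j, -, rfl⟩ hij
        exact hb.pairwise_disjoint ((add_left_injective 1).ne (by rintro rfl; exact hij rfl))
      sup_fst := by rw [sup_image]; exact hb.sup_eq_top
      sup_snd := by
        rw [sup_image]
        exact (sup_map univ (Equiv.addRight 1).toEmbedding b).symm.trans
          (by rw [map_univ_equiv, hb.sup_eq_top]) }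
  obtain ⟨g, hg, hgs⟩ := hs.exists_orderIso_extends hμ hhom
  exact ⟨g, hg, fun i => hgs _ (mem_image_of_mem _ (mem_univ i))⟩

theorem eq_of_rotate [AddCommMonoid M] (hμ : IsBAMeasure μ) {n : ℕ} {h : B ≃o B}
    (hh : PreservesMeas μ h) {α β : M} {d e : Fin (n + 1) → B}
    (hd : IsEquiPartition μ α d) (hdh : ∀ i, h (d i) = d (i + 1))
    (he : IsEquiPartition μ β e) (heh : ∀ j, h (e j) = e (j + 1)) : α = β := by
  set m : Fin (n + 1) → Fin (n + 1) → M := fun i j => μ (d i ⊓ e j)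
  have hdiag : ∀ i k, m i (i + k) = m 0 k := fun i k => by
    simpa only [zero_add] using Fin.apply_eq_apply_zero_of_apply_add_one
      (F := fun i => m i (i + k)) (fun i => by
        simp only [m, add_right_comm i 1 k, ← hdh, ← heh, ← OrderIso.map_inf]
        exact hh _) i
  calc α = ∑ j, m 0 j := by
        rw [← hd.map_eq 0]
        exact hμ.map_eq_sum_inf he.pairwise_disjoint he.sup_eq_top _
    _ = ∑ i, m 0 (-i) := (Fintype.sum_equiv (Equiv.neg _) _ _ fun _ => rfl).symm
    _ = ∑ i, m i 0 := sum_congr rfl fun i _ => by rw [← hdiag i (-i), add_neg_cancel]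
    _ = β := by
      rw [← he.map_eq 0, hμ.map_eq_sum_inf hd.pairwise_disjoint hd.sup_eq_top]
      simp only [m, inf_comm]

end IsEquiPartition

theorem RokhlinProperty.exists_rotate {G : Type*} [AddCommGroup G] {μ : B → G} [Countable B]
    (hR : RokhlinProperty μ) (hμ : IsBAMeasure μ) (hhom : MeasHomogeneous μ) (n : ℕ) :
    ∃ h : B ≃o B, PreservesMeas μ h ∧ ∀ {c : G} {b : Fin (n + 1) → B}, IsEquiPartition μ c b →
      ∃ d : Fin (n + 1) → B, IsEquiPartition μ c d ∧ ∀ i, h (d i) = d (i + 1) := by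
  obtain ⟨h, hh, hdense⟩ := hR
  refine ⟨h, hh, fun {c b} hb => ?_⟩
  obtain ⟨g, hg, hgb⟩ := hb.exists_orderIso_rotate hμ hhom
  obtain ⟨u, hu, hconj⟩ := hdense g hg (univ.image b)
  refine ⟨fun i => u.symm (b i), hb.map_orderIso hu.symm, fun i => ?_⟩
  have hi : u (h (u.symm (b i))) = b (i + 1) :=
    hgb i ▸ (hconj (b i) (mem_image_of_mem _ (mem_univ i))).1
  exact u.eq_symm_apply.2 hi

theorem common_measure_unique_general {G : Type*} [AddCommGroup G]
    [Countable B]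
    (lam : B → G) (hlam : IsBAMeasure lam) (hhom : MeasHomogeneous lam)
    (hR : RokhlinProperty lam) {N : ℕ} (hN : 1 < N) (α β : G)
    (hα : AdmitsEquiPartitionWith lam N ⊤ α)
    (hβ : AdmitsEquiPartitionWith lam N ⊤ β) :
    α = β := by
  obtain ⟨n, rfl⟩ : ∃ n, N = n + 1 := ⟨N - 1, by omega⟩
  obtain ⟨h, hh, hrotate⟩ := hR.exists_rotate hlam hhom n
  obtain ⟨b, hb⟩ := hα.exists_isEquiPartition
  obtain ⟨c, hc⟩ := hβ.exists_isEquiPartition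
  obtain ⟨d, hd, hdh⟩ := hrotate hb
  obtain ⟨e, he, heh⟩ := hrotate hc
  exact hd.eq_of_rotate hlam hh hdh he heh

/-- if a group-valued homogeneous measure has the Rokhlin
property and `⊤` admits two equi-measured `N`-partitions (`N > 1`) with common
measures `α` and `β`, then `α = β`. -/
theorem common_measure_unique {G : Type*} [AddCommGroup G]
    [Countable B] [Nontrivial B]
    (hatomless : ∀ a : B, a ≠ ⊥ → ∃ b : B, b ≠ ⊥ ∧ b < a)
    (lam : B → G) (hlam : IsBAMeasure lam) (hhom : MeasHomogeneous lam)
    (hR : RokhlinProperty lam) {N : ℕ} (hN : 1 < N) (α β : G)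
    (hα : AdmitsEquiPartitionWith lam N ⊤ α)
    (hβ : AdmitsEquiPartitionWith lam N ⊤ β) :
    α = β :=
  common_measure_unique_general lam hlam hhom hR hN α β hα hβ
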